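/- arXiv:2512.24270 — 2 statements merged into one kernel-verified Lean document; each statement's English description precedes it below -/
import Mathlib

section
/- Let A be an N×N real matrix with nonnegative entries and β ≥ 0 with β · max_i ∑_j A_{ij} < 1. Let b = (I − β A)^{-1} 𝟙, b̲ = min_i b_i, P = {i : b_i = b̲}, R = {i : b_i > b̲}, and for i ∈ R let d^R_i = ∑_{j ∈ P} A_{ij}; set q = β b̲ (I − β A_{RR})^{-1} d^R. If q_i ≥ b_i − b̲ for all i ∈ R, then for every nonempty subset S ⊆ R and every i ∈ S, the Bonacich centrality of i on the induced subnetwork satisfies [(I − β A[S])^{-1} 𝟙_S]_i ≤ b̲. -/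
/-!
With `M = β • A`, every principal submatrix of `M` is nonnegative with row sums `< 1`, and for such
matrices a maximum principle holds: `v ≤ M v` forces `v ≤ 0`. Hence `1 - M` is invertible with
monotone inverse, and centralities can only grow when nodes are added, so it suffices to treat
`S = R`. Since `b = b̲` on `P`, the equation `b = 𝟙 + M b` restricted to `R` reads
`(1 - M[R]) b_R = 𝟙 + β b̲ d^R`, i.e. `b_R = bon A β R + q`, and `q ≥ b_R - b̲` gives
`bon A β R ≤ b̲`.
-/

open Matrix

/-- Principal submatrix of `A` indexed by the subset `S`. -/
def psub {N : ℕ} (A : Matrix (Fin N) (Fin N) ℝ) (S : Finset (Fin N)) :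
    Matrix {i // i ∈ S} {i // i ∈ S} ℝ :=
  Matrix.of fun i j => A i.1 j.1

/-- Bonacich centrality vector `(I - β A[S])⁻¹ 𝟙_S` of the induced subnetwork on `S`. -/
noncomputable def bon {N : ℕ} (A : Matrix (Fin N) (Fin N) ℝ) (β : ℝ) (S : Finset (Fin N)) :
    {i // i ∈ S} → ℝ :=
  (1 - β • psub A S)⁻¹ *ᵥ fun _ => 1

theorem Fintype.sum_comp_le_sum_of_injective {κ ι : Type*} [Fintype κ] [Fintype ι] {e : κ → ι}
    (he : Function.Injective e) {f : ι → ℝ} (hf : 0 ≤ f) : ∑ k, f (e k) ≤ ∑ j, f j :=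
  (Finset.sum_map Finset.univ ⟨e, he⟩ f).symm.trans_le (Finset.sum_le_univ_sum_of_nonneg hf)

namespace Matrix

variable {ι κ : Type*} [Fintype ι] [Fintype κ]

structure IsStrictlySubstochastic (M : Matrix ι ι ℝ) : Prop where
  nonneg : ∀ i j, 0 ≤ M i j
  sum_row_lt_one : ∀ i, ∑ j, M i j < 1

namespace IsStrictlySubstochastic

variable {M : Matrix ι ι ℝ}

theorem submatrix (hM : M.IsStrictlySubstochastic) {e : κ → ι} (he : Function.Injective e) :
    (M.submatrix e e).IsStrictlySubstochastic where
  nonneg i j := hM.nonneg (e i) (e j)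
  sum_row_lt_one i :=
    (Fintype.sum_comp_le_sum_of_injective he (hM.nonneg (e i))).trans_lt (hM.sum_row_lt_one (e i))

/-- Maximum principle: at a maximal coordinate `k`, `v k ≤ ∑ j, M k j * v j ≤ (∑ j, M k j) * v k`,
which forces `v k ≤ 0`. -/
theorem nonpos_of_le_mulVec (hM : M.IsStrictlySubstochastic) {v : ι → ℝ} (hv : v ≤ M *ᵥ v) :
    v ≤ 0 := by
  intro i
  by_contra! hi
  have : Nonempty ι := ⟨i⟩
  obtain ⟨k, hk⟩ := Finite.exists_max v
  have hpos : 0 < v k := hi.trans_le (hk i)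
  have : v k < v k := calc
    v k ≤ ∑ j, M k j * v j := hv k
    _ ≤ ∑ j, M k j * v k :=
      Finset.sum_le_sum fun j _ => mul_le_mul_of_nonneg_left (hk j) (hM.nonneg k j)
    _ = (∑ j, M k j) * v k := (Finset.sum_mul ..).symm
    _ < 1 * v k := mul_lt_mul_of_pos_right (hM.sum_row_lt_one k) hpos
    _ = v k := one_mul _
  exact lt_irrefl _ this

theorem submatrix_mulVec_comp_le (hM : M.IsStrictlySubstochastic) {e : κ → ι}
    (he : Function.Injective e) {v : ι → ℝ} (hv : 0 ≤ v) :
    M.submatrix e e *ᵥ (v ∘ e) ≤ (M *ᵥ v) ∘ e := fun i =>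
  Fintype.sum_comp_le_sum_of_injective he fun j => mul_nonneg (hM.nonneg (e i) j) (hv j)

variable [DecidableEq ι]

theorem le_of_one_sub_mulVec_le (hM : M.IsStrictlySubstochastic) {u v : ι → ℝ}
    (h : (1 - M) *ᵥ u ≤ (1 - M) *ᵥ v) : u ≤ v := by
  refine sub_nonpos.mp (hM.nonpos_of_le_mulVec fun i => ?_)
  have hi := h i
  simp only [sub_mulVec, one_mulVec, mulVec_sub, Pi.sub_apply] at hi ⊢
  linarith

theorem isUnit_one_sub (hM : M.IsStrictlySubstochastic) : IsUnit (1 - M) :=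
  mulVec_injective_iff_isUnit.mp fun _ _ h =>
    le_antisymm (hM.le_of_one_sub_mulVec_le h.le) (hM.le_of_one_sub_mulVec_le h.ge)

theorem one_sub_mulVec_inv_mulVec (hM : M.IsStrictlySubstochastic) (w : ι → ℝ) :
    (1 - M) *ᵥ ((1 - M)⁻¹ *ᵥ w) = w := by
  rw [mulVec_mulVec, mul_nonsing_inv _ ((isUnit_iff_isUnit_det _).mp hM.isUnit_one_sub),
    one_mulVec]

theorem inv_mulVec_one_sub_mulVec (hM : M.IsStrictlySubstochastic) (w : ι → ℝ) :
    (1 - M)⁻¹ *ᵥ ((1 - M) *ᵥ w) = w := by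
  rw [mulVec_mulVec, nonsing_inv_mul _ ((isUnit_iff_isUnit_det _).mp hM.isUnit_one_sub),
    one_mulVec]

theorem inv_mulVec_nonneg (hM : M.IsStrictlySubstochastic) {w : ι → ℝ} (hw : 0 ≤ w) :
    0 ≤ (1 - M)⁻¹ *ᵥ w :=
  hM.le_of_one_sub_mulVec_le <| by rwa [mulVec_zero, hM.one_sub_mulVec_inv_mulVec]

/-- `x := (1 - M)⁻¹ *ᵥ w` is nonnegative, so dropping the coordinates outside the range of `e`
only decreases `M *ᵥ x`. -/
theorem inv_submatrix_mulVec_le [DecidableEq κ] (hM : M.IsStrictlySubstochastic) {e : κ → ι}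
    (he : Function.Injective e) {w : ι → ℝ} (hw : 0 ≤ w) :
    (1 - M.submatrix e e)⁻¹ *ᵥ (w ∘ e) ≤ ((1 - M)⁻¹ *ᵥ w) ∘ e := by
  refine (hM.submatrix he).le_of_one_sub_mulVec_le fun i => ?_
  have hdrop := hM.submatrix_mulVec_comp_le he (hM.inv_mulVec_nonneg hw) i
  have hfix := congrFun (hM.one_sub_mulVec_inv_mulVec w) (e i)
  rw [(hM.submatrix he).one_sub_mulVec_inv_mulVec]
  simp only [sub_mulVec, one_mulVec, Pi.sub_apply, Function.comp_apply] at hdrop hfix ⊢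
  linarith

end IsStrictlySubstochastic

end Matrix

section Bonacich

variable {N : ℕ} {A : Matrix (Fin N) (Fin N) ℝ} {β : ℝ}

theorem Matrix.IsStrictlySubstochastic.smul_psub (hM : (β • A).IsStrictlySubstochastic)
    (S : Finset (Fin N)) : (β • psub A S).IsStrictlySubstochastic :=
  hM.submatrix Subtype.val_injective

theorem bon_le_of_subset (hM : (β • A).IsStrictlySubstochastic) {S R : Finset (Fin N)}
    (hSR : S ⊆ R) (i : S) : bon A β S i ≤ bon A β R ⟨i, hSR i.2⟩ :=
  (hM.smul_psub R).inv_submatrix_mulVec_le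
    (e := fun i : S => (⟨i, hSR i.2⟩ : R)) (fun _ _ h => Subtype.ext (Subtype.mk.inj h))
    zero_le_one i

theorem one_sub_smul_psub_compl_mulVec {b : Fin N → ℝ} (hb : (1 - β • A) *ᵥ b = fun _ => 1)
    {P : Finset (Fin N)} {c : ℝ} (hbP : ∀ j ∈ P, b j = c) :
    (1 - β • psub A Pᶜ) *ᵥ (fun i : {i // i ∈ Pᶜ} => b i) =
      (fun _ => 1) + (β * c) • fun i : {i // i ∈ Pᶜ} => ∑ j ∈ P, A i j := by
  funext i
  have hi : b i - β * (A *ᵥ b) i = 1 := by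
    simpa only [sub_mulVec, one_mulVec, smul_mulVec, Pi.sub_apply, Pi.smul_apply, smul_eq_mul]
      using congrFun hb i
  have hsplit : (A *ᵥ b) i = c * ∑ j ∈ P, A i j + (psub A Pᶜ *ᵥ fun j => b j) i := by
    rw [mulVec, dotProduct, ← Finset.sum_add_sum_compl P, Finset.mul_sum]
    congr 1
    · exact Finset.sum_congr rfl fun j hj => by rw [hbP j hj, mul_comm]
    · exact (Finset.sum_coe_sort Pᶜ fun j => A i j * b j).symm
  simp only [sub_mulVec, one_mulVec, smul_mulVec, Pi.sub_apply, Pi.smul_apply, Pi.add_apply,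
    smul_eq_mul]
  rw [hsplit] at hi
  linarith

end Bonacich

theorem rich_subsets_collapse_general {N : ℕ} (A : Matrix (Fin N) (Fin N) ℝ) (β : ℝ)
    (hA : ∀ i j, 0 ≤ A i j) (hβ : 0 ≤ β) (hrow : ∀ i, β * ∑ j, A i j < 1)
    (b : Fin N → ℝ) (hb : b = (1 - β • A)⁻¹ *ᵥ fun _ => 1)
    (bmin : ℝ) (hmin_le : ∀ i, bmin ≤ b i)
    (P R : Finset (Fin N))
    (hP : P = Finset.univ.filter fun i => b i = bmin)
    (hR : R = Finset.univ.filter fun i => bmin < b i)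
    (dR : {i // i ∈ R} → ℝ) (hdR : dR = fun i => ∑ j ∈ P, A i.1 j)
    (q : {i // i ∈ R} → ℝ)
    (hq : q = (β * bmin) • ((1 - β • psub A R)⁻¹ *ᵥ dR))
    (hcond : ∀ i : {i // i ∈ R}, b i.1 - bmin ≤ q i) :
    ∀ S : Finset (Fin N), S ⊆ R → S.Nonempty →
      ∀ i : Fin N, ∀ hi : i ∈ S, bon A β S ⟨i, hi⟩ ≤ bmin := by
  have hM : (β • A).IsStrictlySubstochastic :=
    ⟨fun i j => mul_nonneg hβ (hA i j), fun i => by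
      simpa only [Matrix.smul_apply, smul_eq_mul, ← Finset.mul_sum] using hrow i⟩
  have hbfix : (1 - β • A) *ᵥ b = fun _ => 1 := hb ▸ hM.one_sub_mulVec_inv_mulVec _
  have hRP : R = Pᶜ := by
    ext j
    simp [hP, hR, (hmin_le j).lt_iff_ne, eq_comm]
  subst hRP
  have hbR : (fun i : {i // i ∈ Pᶜ} => b i) = bon A β Pᶜ + q := by
    rw [hq, hdR, bon, ← mulVec_smul, ← mulVec_add,
      ← one_sub_smul_psub_compl_mulVec hbfix (c := bmin) (by simp [hP]),
      (hM.smul_psub _).inv_mulVec_one_sub_mulVec]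
  intro S hSR _ i hi
  calc bon A β S ⟨i, hi⟩ ≤ bon A β Pᶜ ⟨i, hSR hi⟩ := bon_le_of_subset hM hSR ⟨i, hi⟩
    _ = b i - q ⟨i, hSR hi⟩ := eq_sub_of_add_eq (congrFun hbR ⟨i, hSR hi⟩).symm
    _ ≤ bmin := by linarith [hcond ⟨i, hSR hi⟩]

/-- If `q_i ≥ b_i - b̲` for all rich nodes `i ∈ R`, then in every nonempty induced
subnetwork `S ⊆ R`, every node's Bonacich centrality is at most `b̲`. -/
theorem rich_subsets_collapse {N : ℕ} (A : Matrix (Fin N) (Fin N) ℝ) (β : ℝ)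
    (hA : ∀ i j, 0 ≤ A i j) (hβ : 0 ≤ β) (hrow : ∀ i, β * ∑ j, A i j < 1)
    (b : Fin N → ℝ) (hb : b = (1 - β • A)⁻¹ *ᵥ fun _ => 1)
    (bmin : ℝ) (hmin_le : ∀ i, bmin ≤ b i) (hmin_attained : ∃ i, b i = bmin)
    (P R : Finset (Fin N))
    (hP : P = Finset.univ.filter fun i => b i = bmin)
    (hR : R = Finset.univ.filter fun i => bmin < b i)
    (dR : {i // i ∈ R} → ℝ) (hdR : dR = fun i => ∑ j ∈ P, A i.1 j)
    (q : {i // i ∈ R} → ℝ)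
    (hq : q = (β * bmin) • ((1 - β • psub A R)⁻¹ *ᵥ dR))
    (hcond : ∀ i : {i // i ∈ R}, b i.1 - bmin ≤ q i) :
    ∀ S : Finset (Fin N), S ⊆ R → S.Nonempty →
      ∀ i : Fin N, ∀ hi : i ∈ S, bon A β S ⟨i, hi⟩ ≤ bmin :=
  rich_subsets_collapse_general A β hA hβ hrow b hb bmin hmin_le P R hP hR dR hdR q hq hcond
end

section
/- Let A be an N×N real matrix with nonnegative entries and β ≥ 0 with β · max_i ∑_j A_{ij} < 1. Let b = (I − β A)^{-1} 𝟙, b̲ = min_i b_i, P = {i : b_i = b̲}, R = {i : b_i > b̲}, and for i ∈ R let d^R_i = ∑_{j ∈ P} A_{ij}; set q = β b̲ (I − β A_{RR})^{-1} d^R. If q_i ≥ b_i − b̲ for all i ∈ R, then for every nonempty subset S of {0,…,N−1}, min_{i ∈ S} [(I − β A[S])^{-1} 𝟙_S]_i ≤ b̲; that is, every induced subnetwork contains a node whose Bonacich centrality does not exceed the original minimum, so the entire network is abandoned in a global cascade once the outside option exceeds the utility corresponding to b̲. -/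
/-!
Write `B := β A[S]`. Because `B` is nonnegative with row sums below one, `I - B` obeys a maximum
principle: `(I - B) e ≤ 0` forces `e ≤ 0` (look at a largest entry of `e`). Hence `I - B` is
invertible and `(I - B)⁻¹ 𝟙` lies below every supersolution `v ≥ 𝟙 + B v` on `S`.

If `S` contains a poor node, `b` itself is a nonnegative supersolution on `S`, so that node has
centrality at most `b̲`. Otherwise `S ⊆ R`, and restricting to a subset can only lower centralities.
Splitting the fixed-point equation of `b` along `P ∪ R` shows that the centrality of the rich
subnetwork is exactly `b - q` on `R`, which is at most `b̲` by hypothesis.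
-/

open Matrix

section MaximumPrinciple

variable {n : Type*} [Fintype n] [DecidableEq n]

lemma one_sub_mulVec_apply (B : Matrix n n ℝ) (v : n → ℝ) (i : n) :
    ((1 - B) *ᵥ v) i = v i - ∑ j, B i j * v j := by
  rw [sub_mulVec, one_mulVec]
  rfl

lemma one_sub_smul_mulVec_apply (c : ℝ) (B : Matrix n n ℝ) (v : n → ℝ) (i : n) :
    ((1 - c • B) *ᵥ v) i = v i - c * ∑ j, B i j * v j := by
  simp [one_sub_mulVec_apply, Finset.mul_sum, mul_assoc]

variable {B : Matrix n n ℝ}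

lemma nonpos_of_one_sub_mulVec_nonpos (hB : ∀ i j, 0 ≤ B i j) (hrow : ∀ i, ∑ j, B i j < 1)
    {e : n → ℝ} (he : ∀ i, ((1 - B) *ᵥ e) i ≤ 0) (i : n) : e i ≤ 0 := by
  have : Nonempty n := ⟨i⟩
  obtain ⟨k, hk⟩ := Finite.exists_max e
  suffices e k ≤ 0 from (hk i).trans this
  by_contra! hpos
  have hek : e k ≤ ∑ j, B k j * e j := by
    linarith [one_sub_mulVec_apply B e k ▸ he k]
  have : ∑ j, B k j * e j ≤ (∑ j, B k j) * e k := by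
    rw [Finset.sum_mul]
    exact Finset.sum_le_sum fun j _ => mul_le_mul_of_nonneg_left (hk j) (hB k j)
  nlinarith [hrow k]

lemma isUnit_det_one_sub (hB : ∀ i j, 0 ≤ B i j) (hrow : ∀ i, ∑ j, B i j < 1) :
    IsUnit (1 - B).det := by
  rw [isUnit_iff_ne_zero]
  intro hdet
  obtain ⟨v, hv0, hv⟩ := exists_mulVec_eq_zero_iff.2 hdet
  refine hv0 (funext fun i => le_antisymm ?_ ?_)
  · exact nonpos_of_one_sub_mulVec_nonpos hB hrow (fun i => by simp [hv]) i
  · exact neg_nonpos.1 <| nonpos_of_one_sub_mulVec_nonpos hB hrow (e := -v)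
      (fun i => by simp [mulVec_neg, hv]) i

lemma one_sub_mulVec_inv_mulVec (hB : ∀ i j, 0 ≤ B i j) (hrow : ∀ i, ∑ j, B i j < 1)
    (u : n → ℝ) : (1 - B) *ᵥ ((1 - B)⁻¹ *ᵥ u) = u := by
  rw [mulVec_mulVec, mul_nonsing_inv _ (isUnit_det_one_sub hB hrow), one_mulVec]

lemma inv_one_sub_mulVec_mulVec (hB : ∀ i j, 0 ≤ B i j) (hrow : ∀ i, ∑ j, B i j < 1)
    (v : n → ℝ) : (1 - B)⁻¹ *ᵥ ((1 - B) *ᵥ v) = v := by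
  rw [mulVec_mulVec, nonsing_inv_mul _ (isUnit_det_one_sub hB hrow), one_mulVec]

lemma inv_one_sub_mulVec_le (hB : ∀ i j, 0 ≤ B i j) (hrow : ∀ i, ∑ j, B i j < 1)
    {u v : n → ℝ} (h : ∀ i, u i ≤ ((1 - B) *ᵥ v) i) (i : n) : ((1 - B)⁻¹ *ᵥ u) i ≤ v i := by
  have := nonpos_of_one_sub_mulVec_nonpos hB hrow (e := (1 - B)⁻¹ *ᵥ u - v) (fun i => by
    simpa [mulVec_sub, one_sub_mulVec_inv_mulVec hB hrow] using h i) i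
  simpa using this

lemma inv_one_sub_mulVec_nonneg (hB : ∀ i j, 0 ≤ B i j) (hrow : ∀ i, ∑ j, B i j < 1)
    {u : n → ℝ} (hu : 0 ≤ u) (i : n) : 0 ≤ ((1 - B)⁻¹ *ᵥ u) i := by
  have := nonpos_of_one_sub_mulVec_nonpos hB hrow (e := -((1 - B)⁻¹ *ᵥ u)) (fun i => by
    simpa [mulVec_neg, one_sub_mulVec_inv_mulVec hB hrow] using hu i) i
  simpa using this

end MaximumPrinciple

section Network

variable {N : ℕ} {A : Matrix (Fin N) (Fin N) ℝ} {β : ℝ}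

lemma smul_nonneg_of_nonneg (hA : ∀ i j, 0 ≤ A i j) (hβ : 0 ≤ β) : ∀ i j, 0 ≤ (β • A) i j :=
  fun i j => mul_nonneg hβ (hA i j)

lemma sum_smul_lt_one (hrow : ∀ i, β * ∑ j, A i j < 1) : ∀ i, ∑ j, (β • A) i j < 1 :=
  fun i => by simpa [Finset.mul_sum] using hrow i

lemma eq_one_add_of_eq_inv_mulVec (hA : ∀ i j, 0 ≤ A i j) (hβ : 0 ≤ β)
    (hrow : ∀ i, β * ∑ j, A i j < 1) {b : Fin N → ℝ}
    (hb : b = (1 - β • A)⁻¹ *ᵥ fun _ => 1) (i : Fin N) : b i = 1 + β * ∑ j, A i j * b j := by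
  have := congrFun (one_sub_mulVec_inv_mulVec (smul_nonneg_of_nonneg hA hβ)
    (sum_smul_lt_one hrow) fun _ => 1) i
  rw [← hb, one_sub_smul_mulVec_apply] at this
  linarith

lemma smul_psub_nonneg (hA : ∀ i j, 0 ≤ A i j) (hβ : 0 ≤ β) (S : Finset (Fin N)) :
    ∀ i j, 0 ≤ (β • psub A S) i j :=
  fun i j => mul_nonneg hβ (hA i.1 j.1)

lemma sum_smul_psub_lt_one (hA : ∀ i j, 0 ≤ A i j) (hβ : 0 ≤ β)
    (hrow : ∀ i, β * ∑ j, A i j < 1) (S : Finset (Fin N)) :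
    ∀ i, ∑ j, (β • psub A S) i j < 1 := by
  intro i
  calc ∑ j, (β • psub A S) i j = β * ∑ j ∈ S, A i j := by
        rw [Finset.mul_sum, ← Finset.sum_coe_sort S]; rfl
    _ ≤ β * ∑ j, A i j := mul_le_mul_of_nonneg_left
        (Finset.sum_le_sum_of_subset_of_nonneg (Finset.subset_univ S) fun j _ _ => hA i j) hβ
    _ < 1 := hrow i

lemma one_sub_smul_psub_mulVec_apply (S : Finset (Fin N)) (v : Fin N → ℝ) (i : {i // i ∈ S}) :
    ((1 - β • psub A S) *ᵥ fun j : {j // j ∈ S} => v j) i = v i - β * ∑ j ∈ S, A i j * v j := by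
  rw [one_sub_smul_mulVec_apply, ← Finset.sum_coe_sort S]
  rfl

def IsSupersolution (A : Matrix (Fin N) (Fin N) ℝ) (β : ℝ) (S : Finset (Fin N))
    (v : Fin N → ℝ) : Prop :=
  ∀ i ∈ S, 1 + β * ∑ j ∈ S, A i j * v j ≤ v i

lemma IsSupersolution.subset (hA : ∀ i j, 0 ≤ A i j) (hβ : 0 ≤ β) {S T : Finset (Fin N)}
    {v : Fin N → ℝ} (hv : 0 ≤ v) (hT : IsSupersolution A β T v) (hST : S ⊆ T) :
    IsSupersolution A β S v := by
  intro i hi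
  have : ∑ j ∈ S, A i j * v j ≤ ∑ j ∈ T, A i j * v j :=
    Finset.sum_le_sum_of_subset_of_nonneg hST fun j _ _ => mul_nonneg (hA i j) (hv j)
  linarith [hT i (hST hi), mul_le_mul_of_nonneg_left this hβ]

lemma bon_le_of_isSupersolution (hA : ∀ i j, 0 ≤ A i j) (hβ : 0 ≤ β)
    (hrow : ∀ i, β * ∑ j, A i j < 1) {S : Finset (Fin N)} {v : Fin N → ℝ}
    (hv : IsSupersolution A β S v) (i : {i // i ∈ S}) : bon A β S i ≤ v i :=
  inv_one_sub_mulVec_le (smul_psub_nonneg hA hβ S) (sum_smul_psub_lt_one hA hβ hrow S)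
    (u := fun _ => 1) (fun i => by
      rw [one_sub_smul_psub_mulVec_apply]
      linarith [hv i i.2]) i

lemma bon_nonneg (hA : ∀ i j, 0 ≤ A i j) (hβ : 0 ≤ β) (hrow : ∀ i, β * ∑ j, A i j < 1)
    (S : Finset (Fin N)) (i : {i // i ∈ S}) : 0 ≤ bon A β S i :=
  inv_one_sub_mulVec_nonneg (smul_psub_nonneg hA hβ S) (sum_smul_psub_lt_one hA hβ hrow S)
    (fun _ => zero_le_one) i

lemma bon_le_bon_of_subset (hA : ∀ i j, 0 ≤ A i j) (hβ : 0 ≤ β)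
    (hrow : ∀ i, β * ∑ j, A i j < 1) {S T : Finset (Fin N)} (hST : S ⊆ T) (i : {i // i ∈ S}) :
    bon A β S i ≤ bon A β T ⟨i, hST i.2⟩ := by
  let v : Fin N → ℝ := fun j => if h : j ∈ T then bon A β T ⟨j, h⟩ else 0
  have hv0 : 0 ≤ v := fun j => by
    by_cases h : j ∈ T <;> simp [v, h, bon_nonneg hA hβ hrow]
  have hvT : IsSupersolution A β T v := by
    intro j hj
    have hsol : (1 - β • psub A T) *ᵥ bon A β T = fun _ => 1 :=
      one_sub_mulVec_inv_mulVec (smul_psub_nonneg hA hβ T) (sum_smul_psub_lt_one hA hβ hrow T) _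
    have hrestr : (fun k : {k // k ∈ T} => v k) = bon A β T := funext fun k => dif_pos k.2
    have := congrFun hsol ⟨j, hj⟩
    rw [← hrestr, one_sub_smul_psub_mulVec_apply] at this
    linarith
  simpa [v, hST i.2] using bon_le_of_isSupersolution hA hβ hrow (hvT.subset hA hβ hv0 hST) i

lemma bon_eq_sub_of_const_on_compl (hA : ∀ i j, 0 ≤ A i j) (hβ : 0 ≤ β)
    (hrow : ∀ i, β * ∑ j, A i j < 1) {b : Fin N → ℝ} (hb : ∀ i, b i = 1 + β * ∑ j, A i j * b j)
    {R : Finset (Fin N)} {c : ℝ} (hc : ∀ i ∉ R, b i = c) :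
    bon A β R = (fun i : {i // i ∈ R} => b i) -
      (β * c) • ((1 - β • psub A R)⁻¹ *ᵥ fun i : {i // i ∈ R} => ∑ j ∈ Rᶜ, A i j) := by
  have hMb : (1 - β • psub A R) *ᵥ (fun i : {i // i ∈ R} => b i) =
      (fun _ => 1) + (β * c) • fun i : {i // i ∈ R} => ∑ j ∈ Rᶜ, A i j := by
    funext i
    have hsplit := Finset.sum_add_sum_compl R fun j => A i j * b j
    have hcompl : ∑ j ∈ Rᶜ, A i j * b j = c * ∑ j ∈ Rᶜ, A i j := by
      rw [Finset.mul_sum]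
      exact Finset.sum_congr rfl fun j hj => by rw [hc j (Finset.mem_compl.1 hj), mul_comm]
    rw [one_sub_smul_psub_mulVec_apply, Pi.add_apply, Pi.smul_apply, smul_eq_mul]
    linear_combination hb i - β * hsplit + β * hcompl
  rw [← inv_one_sub_mulVec_mulVec (smul_psub_nonneg hA hβ R) (sum_smul_psub_lt_one hA hβ hrow R)
    (fun i : {i // i ∈ R} => b i), hMb, mulVec_add, mulVec_smul, add_sub_cancel_right]
  rfl

end Network

theorem global_collapse_general {N : ℕ} (A : Matrix (Fin N) (Fin N) ℝ) (β : ℝ)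
    (hA : ∀ i j, 0 ≤ A i j) (hβ : 0 ≤ β) (hrow : ∀ i, β * ∑ j, A i j < 1)
    (b : Fin N → ℝ) (hb : b = (1 - β • A)⁻¹ *ᵥ fun _ => 1)
    (bmin : ℝ) (hmin_le : ∀ i, bmin ≤ b i)
    (P R : Finset (Fin N))
    (hP : P = Finset.univ.filter fun i => b i = bmin)
    (hR : R = Finset.univ.filter fun i => bmin < b i)
    (dR : {i // i ∈ R} → ℝ) (hdR : dR = fun i => ∑ j ∈ P, A i.1 j)
    (q : {i // i ∈ R} → ℝ)
    (hq : q = (β * bmin) • ((1 - β • psub A R)⁻¹ *ᵥ dR))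
    (hcond : ∀ i : {i // i ∈ R}, b i.1 - bmin ≤ q i) :
    ∀ S : Finset (Fin N), S.Nonempty →
      ∃ i : {i // i ∈ S}, bon A β S i ≤ bmin := by
  have hbeq := eq_one_add_of_eq_inv_mulVec hA hβ hrow hb
  have hb0 : 0 ≤ b := hb ▸ inv_one_sub_mulVec_nonneg (smul_nonneg_of_nonneg hA hβ)
    (sum_smul_lt_one hrow) fun _ => zero_le_one
  have hpoor : ∀ i ∉ R, b i = bmin := fun i hi =>
    le_antisymm (by simpa [hR] using hi) (hmin_le i)
  have hPR : P = Rᶜ := by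
    ext i
    simp only [hP, hR, Finset.mem_filter, Finset.mem_univ, true_and, Finset.mem_compl, not_lt]
    exact ⟨fun h => h.le, fun h => le_antisymm h (hmin_le i)⟩
  intro S hS
  by_cases hSR : S ⊆ R
  · have hbonR := bon_eq_sub_of_const_on_compl hA hβ hrow hbeq hpoor
    obtain ⟨i, hi⟩ := hS
    refine ⟨⟨i, hi⟩, ?_⟩
    calc bon A β S ⟨i, hi⟩ ≤ bon A β R ⟨i, hSR hi⟩ := bon_le_bon_of_subset hA hβ hrow hSR _
      _ = b i - q ⟨i, hSR hi⟩ := by rw [hbonR, hq, hdR, hPR]; rfl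
      _ ≤ bmin := by linarith [hcond ⟨i, hSR hi⟩]
  · obtain ⟨i, hiS, hiR⟩ := Finset.not_subset.1 hSR
    have hbsup : IsSupersolution A β Finset.univ b := fun i _ => (hbeq i).ge
    refine ⟨⟨i, hiS⟩, ?_⟩
    calc bon A β S ⟨i, hiS⟩ ≤ b i :=
          bon_le_of_isSupersolution hA hβ hrow (hbsup.subset hA hβ hb0 (Finset.subset_univ S)) _
      _ = bmin := hpoor i hiR

/-- Global cascade condition: if `q_i ≥ b_i - b̲` for all rich nodes `i ∈ R`, then
every nonempty induced subnetwork contains a node whose Bonacich centrality does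
not exceed the original minimum `b̲`, so the whole network is abandoned. -/
theorem global_collapse {N : ℕ} (A : Matrix (Fin N) (Fin N) ℝ) (β : ℝ)
    (hA : ∀ i j, 0 ≤ A i j) (hβ : 0 ≤ β) (hrow : ∀ i, β * ∑ j, A i j < 1)
    (b : Fin N → ℝ) (hb : b = (1 - β • A)⁻¹ *ᵥ fun _ => 1)
    (bmin : ℝ) (hmin_le : ∀ i, bmin ≤ b i) (hmin_attained : ∃ i, b i = bmin)
    (P R : Finset (Fin N))
    (hP : P = Finset.univ.filter fun i => b i = bmin)
    (hR : R = Finset.univ.filter fun i => bmin < b i)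
    (dR : {i // i ∈ R} → ℝ) (hdR : dR = fun i => ∑ j ∈ P, A i.1 j)
    (q : {i // i ∈ R} → ℝ)
    (hq : q = (β * bmin) • ((1 - β • psub A R)⁻¹ *ᵥ dR))
    (hcond : ∀ i : {i // i ∈ R}, b i.1 - bmin ≤ q i) :
    ∀ S : Finset (Fin N), S.Nonempty →
      ∃ i : {i // i ∈ S}, bon A β S i ≤ bmin :=
  global_collapse_general A β hA hβ hrow b hb bmin hmin_le P R hP hR dR hdR q hq hcond
end
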